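/- arXiv:math/0110018 — 2 statements merged into one kernel-verified Lean document; each statement's English description precedes it below -/
import Mathlib

section
/- Let a finite group Γ act on a topological space X, and define the extended quotient as the quotient of X̂ = {(γ, x) ∈ Γ × X : γ·x = x} by the Γ-action g·(γ, x) = (gγg⁻¹, g·x). Then the extended quotient is homeomorphic to the disjoint union, over a set of representatives γ of the conjugacy classes of Γ, of the quotients X^γ / Z(γ), where X^γ = {x ∈ X : γ·x = x} is the fixed-point set and Z(γ) is the centralizer of γ in Γ. -/
/-- The "extended" space `X̂ = {(γ, x) : γ • x = x}`, a subspace of `Γ × X`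
(with `Γ` finite and discrete). -/
abbrev ExtSpace (Γ X : Type*) [Group Γ] [MulAction Γ X] : Type _ :=
  {p : Γ × X // p.1 • p.2 = p.2}

/-- The action `g • (γ, x) = (gγg⁻¹, g • x)` of `Γ` on `X̂`. -/
instance ExtSpace.mulAction (Γ X : Type*) [Group Γ] [MulAction Γ X] :
    MulAction Γ (ExtSpace Γ X) where
  smul g p := ⟨(g * p.1.1 * g⁻¹, g • p.1.2), by
    show (g * p.1.1 * g⁻¹) • (g • p.1.2) = g • p.1.2
    rw [mul_smul, mul_smul, inv_smul_smul, p.2]⟩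
  one_smul p := Subtype.ext (by
    show ((1 : Γ) * p.1.1 * (1 : Γ)⁻¹, (1 : Γ) • p.1.2) = p.1
    simp)
  mul_smul g h p := Subtype.ext (by
    show ((g * h) * p.1.1 * (g * h)⁻¹, (g * h) • p.1.2)
        = (g * (h * p.1.1 * h⁻¹) * g⁻¹, g • h • p.1.2)
    rw [Prod.mk.injEq]
    exact ⟨by group, mul_smul g h p.1.2⟩)

/-- The fixed-point set `X^γ`. -/
abbrev FixedPts {Γ : Type*} (X : Type*) [Group Γ] [MulAction Γ X] (γ : Γ) : Type _ :=
  {x : X // γ • x = x}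

/-- The centralizer `Z(γ)` acts on the fixed-point set `X^γ`. -/
instance FixedPts.mulAction (Γ X : Type*) [Group Γ] [MulAction Γ X] (γ : Γ) :
    MulAction (Subgroup.centralizer ({γ} : Set Γ)) (FixedPts X γ) where
  smul g x := ⟨(g : Γ) • x.1, by
    have hg : γ * (g : Γ) = (g : Γ) * γ :=
      Subgroup.mem_centralizer_iff.mp g.2 γ (Set.mem_singleton γ)
    calc γ • (g : Γ) • x.1 = (γ * (g : Γ)) • x.1 := (mul_smul _ _ _).symm
      _ = ((g : Γ) * γ) • x.1 := by rw [hg]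
      _ = (g : Γ) • γ • x.1 := mul_smul _ _ _
      _ = (g : Γ) • x.1 := by rw [x.2]⟩
  one_smul x := Subtype.ext (by
    show ((1 : Subgroup.centralizer ({γ} : Set Γ)) : Γ) • x.1 = x.1
    simp)
  mul_smul g h x := Subtype.ext (by
    show ((g * h : Subgroup.centralizer ({γ} : Set Γ)) : Γ) • x.1 = _
    rw [Subgroup.coe_mul, mul_smul]; rfl)

/-! Write `o` for the chosen representative of the conjugacy class `[γ]` and choose `g` with
`g * o * g⁻¹ = γ`; the point `(γ, x)` of `X̂` is sent to the class of `g⁻¹ • x ∈ X^o` in the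
summand of `[γ]`. Moving `(γ, x)` by `h ∈ Γ` changes `g⁻¹ • x` by an element of `Z(o)`, so
this descends to a bijection on `X̂ / Γ`, whose inverse is induced summand-wise by
`x ↦ (o, x)`. Since `Γ` is discrete, `X̂` is the topological disjoint union of the `X^γ`, so
both maps are continuous. -/

theorem isOpenMap_subtype_mk_prod {ι X : Type*} [TopologicalSpace ι] [DiscreteTopology ι]
    [TopologicalSpace X] (P : ι → X → Prop) (i : ι) :
    IsOpenMap fun x : {x // P i x} => (⟨(i, x.1), x.2⟩ : {p : ι × X // P p.1 p.2}) := by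
  intro U hU
  obtain ⟨V, hV, rfl⟩ := isOpen_induced_iff.mp hU
  have himage : (fun x : {x // P i x} => (⟨(i, x.1), x.2⟩ : {p : ι × X // P p.1 p.2})) ''
      (Subtype.val ⁻¹' V) = Subtype.val ⁻¹' ({i} ×ˢ V) := by
    ext ⟨⟨j, x⟩, hx⟩
    simp only [Set.mem_image, Set.mem_preimage, Set.mem_prod, Set.mem_singleton_iff,
      Subtype.exists, Subtype.mk.injEq, Prod.mk.injEq]
    constructor
    · rintro ⟨x, -, hxV, rfl, rfl⟩
      exact ⟨rfl, hxV⟩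
    · rintro ⟨rfl, hxV⟩
      exact ⟨x, hx, hxV, rfl, rfl⟩
  rw [himage]
  exact ((isOpen_discrete _).prod hV).preimage continuous_subtype_val

def Homeomorph.sigmaSubtypeOfDiscrete {ι X : Type*} [TopologicalSpace ι] [DiscreteTopology ι]
    [TopologicalSpace X] (P : ι → X → Prop) :
    (Σ i, {x // P i x}) ≃ₜ {p : ι × X // P p.1 p.2} :=
  Equiv.toHomeomorphOfContinuousOpen
    { toFun := fun s => ⟨(s.1, s.2.1), s.2.2⟩
      invFun := fun p => ⟨p.1.1, p.1.2, p.2⟩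
      left_inv := fun _ => rfl
      right_inv := fun _ => rfl }
    (continuous_sigma fun _ => (continuous_const.prodMk continuous_subtype_val).subtype_mk _)
    (isOpenMap_sigma.mpr (isOpenMap_subtype_mk_prod P))

namespace ExtendedQuotient

open MulAction Subgroup

variable {Γ X : Type*} [Group Γ] [MulAction Γ X]

abbrev Decomp (Γ X : Type*) [Group Γ] [MulAction Γ X] : Type _ :=
  Σ c : ConjClasses Γ,
    Quotient (orbitRel (centralizer ({Quotient.out c} : Set Γ)) (FixedPts X (Quotient.out c)))

noncomputable def conjugator (γ : Γ) : Γ :=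
  Classical.choose (isConj_iff.mp
    (ConjClasses.mk_eq_mk_iff_isConj.mp (Quotient.out_eq (ConjClasses.mk γ))))

theorem conjugator_mul_out_mul_inv (γ : Γ) :
    conjugator γ * (ConjClasses.mk γ).out * (conjugator γ)⁻¹ = γ :=
  Classical.choose_spec (isConj_iff.mp
    (ConjClasses.mk_eq_mk_iff_isConj.mp (Quotient.out_eq (ConjClasses.mk γ))))

theorem inv_conjugator_mul_mul (γ : Γ) :
    (conjugator γ)⁻¹ * γ * conjugator γ = (ConjClasses.mk γ).out :=
  calc (conjugator γ)⁻¹ * γ * conjugator γ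
      = (conjugator γ)⁻¹ * (conjugator γ * (ConjClasses.mk γ).out * (conjugator γ)⁻¹) *
          conjugator γ := by rw [conjugator_mul_out_mul_inv]
    _ = (ConjClasses.mk γ).out := by group

theorem conjugator_out_mem_centralizer (c : ConjClasses Γ) :
    conjugator c.out ∈ centralizer ({c.out} : Set Γ) := by
  have hspec := conjugator_mul_out_mul_inv c.out
  rw [show ConjClasses.mk c.out = c from Quotient.out_eq c] at hspec
  exact mem_centralizer_singleton_iff.mpr (mul_inv_eq_iff_eq_mul.mp hspec)

theorem inv_mul_mul_mem_centralizer {a b h γ o : Γ} (ha : a * o * a⁻¹ = γ)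
    (hb : b * o * b⁻¹ = h * γ * h⁻¹) : b⁻¹ * h * a ∈ centralizer ({o} : Set Γ) := by
  have ho : o = b⁻¹ * (h * (a * o * a⁻¹) * h⁻¹) * b := by rw [ha, ← hb]; group
  rw [mem_centralizer_singleton_iff]
  calc b⁻¹ * h * a * o = b⁻¹ * (h * (a * o * a⁻¹) * h⁻¹) * b * (b⁻¹ * h * a) := by group
    _ = o * (b⁻¹ * h * a) := by rw [← ho]

theorem inv_conjugator_smul_mem_fixedPts {γ : Γ} {x : X} (hx : γ • x = x) :
    (ConjClasses.mk γ).out • (conjugator γ)⁻¹ • x = (conjugator γ)⁻¹ • x := by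
  rw [← mul_smul, ← inv_conjugator_mul_mul, mul_inv_cancel_right, mul_smul, hx]

theorem Decomp.mk_eq_mk {c d : ConjClasses Γ} (hcd : c = d) (y : FixedPts X c.out)
    (z : FixedPts X d.out) {g : Γ} (hg : g ∈ centralizer ({d.out} : Set Γ))
    (hgz : g • z.1 = y.1) :
    (⟨c, ⟦y⟧⟩ : Decomp Γ X) = ⟨d, ⟦z⟧⟩ := by
  subst hcd
  exact Sigma.ext rfl (heq_of_eq (Quotient.sound (mem_orbit_iff.mpr ⟨⟨g, hg⟩, Subtype.ext hgz⟩)))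

noncomputable def toDecompFiber (γ : Γ) (x : FixedPts X γ) :
    Quotient (orbitRel (centralizer ({(ConjClasses.mk γ).out} : Set Γ))
      (FixedPts X (ConjClasses.mk γ).out)) :=
  ⟦⟨(conjugator γ)⁻¹ • x.1, inv_conjugator_smul_mem_fixedPts x.2⟩⟧

noncomputable def toDecomp (p : ExtSpace Γ X) : Decomp Γ X :=
  ⟨ConjClasses.mk p.1.1, toDecompFiber p.1.1 ⟨p.1.2, p.2⟩⟩

theorem toDecomp_smul (h : Γ) (p : ExtSpace Γ X) : toDecomp (h • p) = toDecomp p := by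
  obtain ⟨⟨γ, x⟩, hx⟩ := p
  have hconj : ConjClasses.mk (h * γ * h⁻¹) = ConjClasses.mk γ :=
    ConjClasses.mk_eq_mk_iff_isConj.mpr (isConj_iff.mpr ⟨h⁻¹, by group⟩)
  have hout := conjugator_mul_out_mul_inv (h * γ * h⁻¹)
  rw [hconj] at hout
  refine Decomp.mk_eq_mk hconj _ _
    (inv_mul_mul_mem_centralizer (conjugator_mul_out_mul_inv γ) hout) ?_
  change (_ * h * conjugator γ) • (conjugator γ)⁻¹ • x = (conjugator (h * γ * h⁻¹))⁻¹ • h • x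
  rw [← mul_smul, ← mul_smul, mul_inv_cancel_right]

theorem toDecomp_out (c : ConjClasses Γ) (y : FixedPts X c.out) :
    toDecomp (⟨(c.out, y.1), y.2⟩ : ExtSpace Γ X) = ⟨c, ⟦y⟧⟩ :=
  Decomp.mk_eq_mk (Quotient.out_eq c) _ _ (inv_mem (conjugator_out_mem_centralizer c)) rfl

theorem mk_out_eq_of_orbitRel (c : ConjClasses Γ) {y z : FixedPts X c.out}
    (hyz : orbitRel (centralizer ({c.out} : Set Γ)) (FixedPts X c.out) y z) :
    (⟦⟨(c.out, y.1), y.2⟩⟧ : Quotient (orbitRel Γ (ExtSpace Γ X))) = ⟦⟨(c.out, z.1), z.2⟩⟧ := by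
  obtain ⟨g, rfl⟩ := mem_orbit_iff.mp hyz
  refine Quotient.sound (mem_orbit_iff.mpr ⟨(g : Γ), Subtype.ext ?_⟩)
  change ((g : Γ) * c.out * (g : Γ)⁻¹, (g : Γ) • z.1) = (c.out, (g : Γ) • z.1)
  rw [mem_centralizer_singleton_iff.mp g.2, mul_inv_cancel_right]

noncomputable def ofDecompFiber (c : ConjClasses Γ) :
    Quotient (orbitRel (centralizer ({c.out} : Set Γ)) (FixedPts X c.out)) →
      Quotient (orbitRel Γ (ExtSpace Γ X)) :=
  Quotient.lift (fun y => ⟦⟨(c.out, y.1), y.2⟩⟧) fun _ _ => mk_out_eq_of_orbitRel c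

noncomputable def ofDecomp (s : Decomp Γ X) : Quotient (orbitRel Γ (ExtSpace Γ X)) :=
  ofDecompFiber s.1 s.2

theorem ofDecomp_toDecomp (p : ExtSpace Γ X) : ofDecomp (toDecomp p) = ⟦p⟧ := by
  refine Quotient.sound (mem_orbit_iff.mpr ⟨(conjugator p.1.1)⁻¹, Subtype.ext ?_⟩)
  change ((conjugator p.1.1)⁻¹ * p.1.1 * (conjugator p.1.1)⁻¹⁻¹, (conjugator p.1.1)⁻¹ • p.1.2)
      = ((ConjClasses.mk p.1.1).out, (conjugator p.1.1)⁻¹ • p.1.2)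
  rw [inv_inv, inv_conjugator_mul_mul]

noncomputable def quotientEquivDecomp : Quotient (orbitRel Γ (ExtSpace Γ X)) ≃ Decomp Γ X where
  toFun := Quotient.lift toDecomp fun _ _ hpq => by
    obtain ⟨h, rfl⟩ := mem_orbit_iff.mp hpq
    exact toDecomp_smul h _
  invFun := ofDecomp
  left_inv q := Quotient.inductionOn q ofDecomp_toDecomp
  right_inv := fun ⟨c, q⟩ => Quotient.inductionOn q (toDecomp_out c)

variable [TopologicalSpace X]

theorem continuous_ofDecompFiber [TopologicalSpace Γ] (c : ConjClasses Γ) :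
    Continuous (ofDecompFiber c : _ → Quotient (orbitRel Γ (ExtSpace Γ X))) :=
  Continuous.quotient_lift
    (continuous_quot_mk.comp ((continuous_const.prodMk continuous_subtype_val).subtype_mk _)) _

theorem continuous_toDecompFiber (hcont : ∀ γ : Γ, Continuous fun x : X => γ • x) (γ : Γ) :
    Continuous (toDecompFiber γ : FixedPts X γ → _) :=
  continuous_quot_mk.comp (((hcont _).comp continuous_subtype_val).subtype_mk _)

theorem continuous_toDecomp [TopologicalSpace Γ] [DiscreteTopology Γ]
    (hcont : ∀ γ : Γ, Continuous fun x : X => γ • x) :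
    Continuous (toDecomp : ExtSpace Γ X → Decomp Γ X) := by
  let e := Homeomorph.sigmaSubtypeOfDiscrete fun (γ : Γ) (x : X) => γ • x = x
  have hsigma : Continuous (toDecomp ∘ e) := continuous_sigma fun γ =>
    (continuous_sigmaMk : Continuous (Sigma.mk (ConjClasses.mk γ) : _ → Decomp Γ X)).comp
      (continuous_toDecompFiber hcont γ)
  simpa only [Function.comp_assoc, e.self_comp_symm, Function.comp_id]
    using hsigma.comp e.symm.continuous

end ExtendedQuotient

theorem extended_quotient_decomposition_general (Γ X : Type*) [Group Γ]
    [TopologicalSpace Γ] [DiscreteTopology Γ] [MulAction Γ X] [TopologicalSpace X]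
    (hcont : ∀ γ : Γ, Continuous fun x : X => γ • x) :
    Nonempty ((Quotient (MulAction.orbitRel Γ (ExtSpace Γ X))) ≃ₜ
      (Σ c : ConjClasses Γ,
        Quotient (MulAction.orbitRel (Subgroup.centralizer ({Quotient.out c} : Set Γ))
          (FixedPts X (Quotient.out c))))) :=
  ⟨{ toEquiv := ExtendedQuotient.quotientEquivDecomp
     continuous_toFun := (ExtendedQuotient.continuous_toDecomp hcont).quotient_lift _
     continuous_invFun := continuous_sigma ExtendedQuotient.continuous_ofDecompFiber }⟩

/-- For a continuous action of a finite group `Γ` on a topological space `X`,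
the extended quotient `X̂/Γ` is homeomorphic to the disjoint union, over representatives
`γ` of the conjugacy classes of `Γ`, of the quotients `X^γ / Z(γ)`. -/
theorem extended_quotient_decomposition (Γ X : Type*) [Group Γ] [Finite Γ]
    [TopologicalSpace Γ] [DiscreteTopology Γ] [MulAction Γ X] [TopologicalSpace X]
    (hcont : ∀ γ : Γ, Continuous fun x : X => γ • x) :
    Nonempty ((Quotient (MulAction.orbitRel Γ (ExtSpace Γ X))) ≃ₜ
      (Σ c : ConjClasses Γ,
        Quotient (MulAction.orbitRel (Subgroup.centralizer ({Quotient.out c} : Set Γ))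
          (FixedPts X (Quotient.out c))))) :=
  extended_quotient_decomposition_general Γ X hcont
end

section
/- Let γ ∈ S_n have cycle type with r_j cycles of length n_j (1 ≤ j ≤ l, n_j pairwise distinct). Then the quotient of the fixed-point set (𝕋ⁿ)^γ by the action of the centralizer Z(γ) is homeomorphic to the product over j of the symmetric products Sym^{r_j}(𝕋), where Sym^r(𝕋) = 𝕋^r / S_r. In particular, the cyclic factors (ℤ/n_j)^{r_j} of Z(γ) act trivially on (𝕋ⁿ)^γ. -/
/-!
A point of `(𝕋ⁿ)^γ` is a function on the cycles of `γ`, and `g ∈ Z(γ)` acts through the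
permutation it induces on the cycles, which preserves cycle lengths. Conversely every
length-preserving permutation of the cycles is induced by an element of `Z(γ)`: fix a base point
on each cycle and send the `k`-th point of a cycle to the `k`-th point of its image. Hence two
points are `Z(γ)`-equivalent iff their functions on cycles differ by a permutation of the `r_j`
cycles of length `n_j` for each `j`, which is the relation defining `∏ⱼ Sym^{r_j}(𝕋)`; the
resulting continuous bijection from a compact space to a Hausdorff one is a homeomorphism.
An element preserving every cycle induces the identity on cycles, so it acts trivially.
-/

open Equiv

/-- The coordinate-permutation action of `S_r` on the torus `𝕋^r`. -/
instance circlePermAction (r : ℕ) : MulAction (Equiv.Perm (Fin r)) (Fin r → Circle) where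
  smul σ z := fun i => z (σ⁻¹ i)
  one_smul z := funext fun i => by
    show z ((1 : Equiv.Perm (Fin r))⁻¹ i) = z i
    simp
  mul_smul σ τ z := funext fun i => by
    show z ((σ * τ)⁻¹ i) = z (τ⁻¹ (σ⁻¹ i))
    rw [mul_inv_rev, Equiv.Perm.mul_apply]

/-- The symmetric product `Sym^r 𝕋 = 𝕋^r / S_r` (with the quotient topology). -/
abbrev SymTorus (r : ℕ) : Type :=
  Quotient (MulAction.orbitRel (Equiv.Perm (Fin r)) (Fin r → Circle))

/-- The fixed-point set `(𝕋ⁿ)^γ` of a permutation `γ ∈ S_n`. -/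
abbrev TorusFix (n : ℕ) (γ : Equiv.Perm (Fin n)) : Type :=
  {z : Fin n → Circle // ∀ i, z (γ⁻¹ i) = z i}

/-- The centralizer `Z(γ)` acts on the fixed-point set `(𝕋ⁿ)^γ`. -/
instance torusFixAction (n : ℕ) (γ : Equiv.Perm (Fin n)) :
    MulAction (Subgroup.centralizer ({γ} : Set (Equiv.Perm (Fin n)))) (TorusFix n γ) where
  smul g z := ⟨fun i => z.1 ((g : Equiv.Perm (Fin n))⁻¹ i), by
    intro i
    have hg : γ * (g : Equiv.Perm (Fin n)) = (g : Equiv.Perm (Fin n)) * γ :=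
      Subgroup.mem_centralizer_iff.mp g.2 γ (Set.mem_singleton γ)
    have hinv : (g : Equiv.Perm (Fin n))⁻¹ * γ⁻¹ = γ⁻¹ * (g : Equiv.Perm (Fin n))⁻¹ := by
      rw [← mul_inv_rev, ← mul_inv_rev, hg]
    show z.1 ((g : Equiv.Perm (Fin n))⁻¹ (γ⁻¹ i)) = z.1 ((g : Equiv.Perm (Fin n))⁻¹ i)
    rw [← Equiv.Perm.mul_apply, hinv, Equiv.Perm.mul_apply, z.2]⟩
  one_smul z := Subtype.ext (funext fun i => by
    show z.1 (((1 : Subgroup.centralizer ({γ} : Set (Equiv.Perm (Fin n)))) :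
      Equiv.Perm (Fin n))⁻¹ i) = z.1 i
    simp)
  mul_smul g h z := Subtype.ext (funext fun i => by
    show z.1 (((g * h : Subgroup.centralizer ({γ} : Set (Equiv.Perm (Fin n)))) :
        Equiv.Perm (Fin n))⁻¹ i)
      = z.1 ((h : Equiv.Perm (Fin n))⁻¹ ((g : Equiv.Perm (Fin n))⁻¹ i))
    rw [Subgroup.coe_mul, mul_inv_rev, Equiv.Perm.mul_apply])

open MulAction Function Subgroup

theorem MulAction.card_fiber_mk_eq_card_orbit {G α : Type*} [Group G] [MulAction G α] (x : α) :
    Nat.card {y // (⟦y⟧ : orbitRel.Quotient G α) = ⟦x⟧} = Nat.card (orbit G x) :=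
  Nat.card_congr (subtypeEquivRight fun y => by rw [Quotient.eq, orbitRel_apply])

theorem Quotient.card_fiber_apply_eq {α : Type*} {s : Setoid α} (g : Perm α)
    (τ : Perm (Quotient s)) (h : ∀ x, Quotient.mk s (g x) = τ ⟦x⟧) (c : Quotient s) :
    Nat.card {x // Quotient.mk s x = τ c} = Nat.card {x // Quotient.mk s x = c} :=
  (Nat.card_congr (g.subtypeEquiv fun x => by rw [h, τ.injective.eq_iff])).symm

namespace Equiv.Perm

variable {α : Type*}

theorem mem_orbit_zpowers_iff {γ : Perm α} {x y : α} :
    y ∈ orbit (zpowers γ) x ↔ ∃ k : ℤ, (γ ^ k) x = y := by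
  constructor
  · rintro ⟨⟨h, hh⟩, rfl⟩
    obtain ⟨k, rfl⟩ := mem_zpowers_iff.mp hh
    exact ⟨k, rfl⟩
  · rintro ⟨k, rfl⟩
    exact ⟨⟨γ ^ k, zpow_mem (mem_zpowers γ) k⟩, rfl⟩

theorem mk_zpow_apply (γ : Perm α) (k : ℤ) (x : α) :
    (⟦(γ ^ k) x⟧ : orbitRel.Quotient (zpowers γ) α) = ⟦x⟧ :=
  orbitRel.Quotient.quotient_smul_eq (g := (⟨γ ^ k, zpow_mem (mem_zpowers γ) k⟩ : zpowers γ))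

def orbitsPermOfCommute {γ g : Perm α} (h : Commute γ g) :
    Perm (orbitRel.Quotient (zpowers γ) α) :=
  Quotient.congr g fun x y => by
    have hg : ∀ k : ℤ, (γ ^ k) (g y) = g ((γ ^ k) y) := fun k =>
      DFunLike.congr_fun (h.zpow_left k).eq y
    simp only [orbitRel_apply, mem_orbit_zpowers_iff, hg, g.injective.eq_iff]

theorem zpow_apply_eq_zpow_apply_iff_of_minimalPeriod_eq {γ : Perm α} {x y : α}
    (h : minimalPeriod γ x = minimalPeriod γ y) {a b : ℤ} :
    (γ ^ a) x = (γ ^ b) x ↔ (γ ^ a) y = (γ ^ b) y := by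
  have key : ∀ u : α, (γ ^ a) u = (γ ^ b) u ↔ (minimalPeriod γ u : ℤ) ∣ a - b := fun u => by
    rw [show (⇑γ : α → α) = (γ • ·) from rfl, ← zpow_smul_eq_iff_minimalPeriod_dvd,
      ← (γ ^ (-b)).injective.eq_iff]
    simp only [Perm.smul_def, ← Perm.mul_apply, ← zpow_add, neg_add_cancel, zpow_zero,
      Perm.one_apply, neg_add_eq_sub]
  rw [key, key, h]

theorem minimalPeriod_eq_card_orbit_zpowers [Finite α] (γ : Perm α) (x : α) :
    minimalPeriod γ x = Nat.card (orbit (zpowers γ) x) := by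
  have := Fintype.ofFinite (orbit (zpowers γ) x)
  rw [Nat.card_eq_fintype_card, ← minimalPeriod_eq_card]
  rfl

theorem card_fiber_mk_eq_minimalPeriod [Finite α] (γ : Perm α) (x : α) :
    Nat.card {y // (⟦y⟧ : orbitRel.Quotient (zpowers γ) α) = ⟦x⟧} = minimalPeriod γ x := by
  rw [minimalPeriod_eq_card_orbit_zpowers, card_fiber_mk_eq_card_orbit]

theorem exists_commute_mk_apply_eq [Finite α] (γ : Perm α)
    (τ : Perm (orbitRel.Quotient (zpowers γ) α))
    (hτ : ∀ c, Nat.card {y // Quotient.mk _ y = τ c} = Nat.card {y // Quotient.mk _ y = c}) :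
    ∃ g : Perm α, Commute γ g ∧ ∀ x, (⟦g x⟧ : orbitRel.Quotient (zpowers γ) α) = τ ⟦x⟧ := by
  have hout : ∀ x : α, ∃ k : ℤ, (γ ^ k) (⟦x⟧ : orbitRel.Quotient (zpowers γ) α).out = x :=
    fun x => mem_orbit_zpowers_iff.mp
      (orbitRel_apply.mp ((orbitRel (zpowers γ) α).iseqv.symm (Quotient.mk_out x)))
  choose k hk using hout
  have transfer : ∀ (c : orbitRel.Quotient (zpowers γ) α) (a b : ℤ),
      (γ ^ a) (τ c).out = (γ ^ b) (τ c).out ↔ (γ ^ a) c.out = (γ ^ b) c.out := fun c a b =>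
    zpow_apply_eq_zpow_apply_iff_of_minimalPeriod_eq <| by
      rw [← card_fiber_mk_eq_minimalPeriod, ← card_fiber_mk_eq_minimalPeriod, Quotient.out_eq,
        Quotient.out_eq, hτ]
  -- send the `k`-th point of the orbit `c` (counted from `c.out`) to the `k`-th point of `τ c`
  let f : α → α := fun x => (γ ^ k x) (τ ⟦x⟧).out
  have hf_mk : ∀ x, (⟦f x⟧ : orbitRel.Quotient (zpowers γ) α) = τ ⟦x⟧ := fun x => by
    rw [mk_zpow_apply, Quotient.out_eq]
  have hf_comm : ∀ x, f (γ x) = γ (f x) := fun x => by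
    have hγx : (⟦γ x⟧ : orbitRel.Quotient (zpowers γ) α) = ⟦x⟧ := by
      simpa using mk_zpow_apply γ 1 x
    have hk_γx := hk (γ x)
    rw [hγx] at hk_γx
    change (γ ^ k (γ x)) (τ ⟦γ x⟧).out = γ ((γ ^ k x) (τ ⟦x⟧).out)
    rw [hγx, ← Perm.mul_apply, ← zpow_one_add, transfer, hk_γx, zpow_one_add, Perm.mul_apply, hk]
  have hf_inj : Injective f := fun x y hxy => by
    have hc : (⟦y⟧ : orbitRel.Quotient (zpowers γ) α) = ⟦x⟧ :=
      τ.injective (by rw [← hf_mk, ← hf_mk, hxy])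
    have hky := hk y
    change (γ ^ k x) (τ ⟦x⟧).out = (γ ^ k y) (τ ⟦y⟧).out at hxy
    rw [hc] at hxy hky
    rw [← hk x, ← hky, ← transfer, hxy]
  refine ⟨ofBijective f (Finite.injective_iff_bijective.mp hf_inj), ?_, hf_mk⟩
  exact Equiv.ext fun x => (hf_comm x).symm

end Equiv.Perm

namespace TorusFix

variable {n : ℕ} {γ : Perm (Fin n)}

theorem zpowers_le_stabilizer (z : TorusFix n γ) : zpowers γ ≤ stabilizer (Perm (Fin n)) z.1 :=
  zpowers_le.mpr (funext z.2)

theorem apply_eq_of_mem_orbit (z : TorusFix n γ) {x y : Fin n}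
    (h : y ∈ orbit (zpowers γ) x) : z.1 y = z.1 x := by
  obtain ⟨⟨σ, hσ⟩, rfl⟩ := h
  have := congrFun (zpowers_le_stabilizer z (inv_mem hσ)) x
  change z.1 (σ⁻¹⁻¹ x) = z.1 x at this
  rwa [inv_inv] at this

def orbitFun (z : TorusFix n γ) : orbitRel.Quotient (zpowers γ) (Fin n) → Circle :=
  Quotient.lift z.1 fun _ _ h => apply_eq_of_mem_orbit z (orbitRel_apply.mp h)

@[simp]
theorem orbitFun_mk (z : TorusFix n γ) (x : Fin n) : orbitFun z ⟦x⟧ = z.1 x :=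
  rfl

theorem continuous_orbitFun : Continuous (orbitFun : TorusFix n γ → _ → Circle) := by
  refine continuous_pi fun c => ?_
  induction c using Quotient.inductionOn with
  | h x => exact (continuous_apply x).comp continuous_subtype_val

theorem orbitFun_surjective : Surjective (orbitFun : TorusFix n γ → _ → Circle) := fun v =>
  ⟨⟨fun x => v ⟦x⟧, fun i => by simpa using congrArg v (Perm.mk_zpow_apply γ (-1) i)⟩,
    funext fun c => Quotient.inductionOn c fun _ => rfl⟩

theorem exists_smul_eq_iff (z z' : TorusFix n γ) :
    (∃ g : centralizer {γ}, g • z = z') ↔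
      ∃ τ : Perm (orbitRel.Quotient (zpowers γ) (Fin n)),
        (∀ c, Nat.card {x // Quotient.mk _ x = τ c} = Nat.card {x // Quotient.mk _ x = c}) ∧
          ∀ c, orbitFun z' (τ c) = orbitFun z c := by
  constructor
  · rintro ⟨⟨g, hg⟩, rfl⟩
    have hcomm : Commute γ g := (mem_centralizer_singleton_iff.mp hg).symm
    refine ⟨Perm.orbitsPermOfCommute hcomm, Quotient.card_fiber_apply_eq g _ fun _ => rfl,
      fun c => Quotient.inductionOn c fun x => ?_⟩
    exact congrArg z.1 (g.symm_apply_apply x)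
  · rintro ⟨τ, hτ, hz⟩
    obtain ⟨g, hcomm, hg⟩ := Perm.exists_commute_mk_apply_eq γ τ hτ
    refine ⟨⟨g, mem_centralizer_singleton_iff.mpr hcomm.symm⟩, Subtype.ext (funext fun i => ?_)⟩
    change z.1 (g⁻¹ i) = z'.1 i
    rw [← orbitFun_mk, ← hz, ← hg, Perm.coe_inv, apply_symm_apply, orbitFun_mk]

theorem smul_eq_self_of_forall_mem_orbit (g : centralizer {γ})
    (hg : ∀ x, (g : Perm (Fin n)) x ∈ orbit (zpowers γ) x) (z : TorusFix n γ) : g • z = z := by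
  refine Subtype.ext (funext fun i => ?_)
  change z.1 ((g : Perm (Fin n))⁻¹ i) = z.1 i
  simpa using (apply_eq_of_mem_orbit z (hg ((g : Perm (Fin n))⁻¹ i))).symm

end TorusFix

section SymmetricProduct

variable {Ω ι : Type*} {J : Ω → ι} {r : ι → ℕ}

theorem SymTorus.mk_eq_mk_iff {m : ℕ} {w w' : Fin m → Circle} :
    (⟦w⟧ : SymTorus m) = ⟦w'⟧ ↔ ∃ σ : Perm (Fin m), σ • w' = w := by
  rw [Quotient.eq, orbitRel_apply, mem_orbit_iff]

def symProdMap (E : ∀ j, {c // J c = j} ≃ Fin (r j)) (v : Ω → Circle) (j : ι) :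
    SymTorus (r j) :=
  ⟦fun i => v ((E j).symm i)⟧

variable (E : ∀ j, {c // J c = j} ≃ Fin (r j))

theorem continuous_symProdMap : Continuous (symProdMap E) :=
  continuous_pi fun _ => continuous_quotient_mk'.comp (continuous_pi fun _ => continuous_apply _)

theorem symProdMap_surjective : Surjective (symProdMap E) := by
  intro w
  let v : Ω → Circle := fun c => (w (J c)).out (E (J c) ⟨c, rfl⟩)
  have hv : ∀ j (c : {c // J c = j}), v c = (w j).out (E j c) := by
    rintro j ⟨c, rfl⟩
    rfl
  refine ⟨v, funext fun j => ?_⟩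
  change ⟦fun i => v ((E j).symm i)⟧ = w j
  simp only [hv, apply_symm_apply, Quotient.out_eq]

theorem symProdMap_eq_iff (v v' : Ω → Circle) :
    symProdMap E v = symProdMap E v' ↔
      ∃ τ : Perm Ω, (∀ c, J (τ c) = J c) ∧ ∀ c, v' (τ c) = v c := by
  rw [funext_iff]
  simp only [symProdMap, SymTorus.mk_eq_mk_iff]
  constructor
  · intro h
    choose σ hσ using h
    let ρ : ∀ j, Perm {c // J c = j} := fun j => ((E j).trans (σ j)⁻¹).trans (E j).symm
    let τ : Perm Ω := (sigmaFiberEquiv J).permCongr (Perm.sigmaCongrRight ρ)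
    refine ⟨τ, fun c => (ρ (J c) ⟨c, rfl⟩).2, fun c => ?_⟩
    have h := congrFun (hσ (J c)) (E (J c) ⟨c, rfl⟩)
    change v' ((E _).symm ((σ _)⁻¹ (E _ ⟨c, rfl⟩))) = v ((E _).symm (E _ ⟨c, rfl⟩)) at h
    rwa [symm_apply_apply] at h
  · rintro ⟨τ, hτJ, hτ⟩ j
    refine ⟨((E j).permCongr (τ.subtypePerm fun c => by rw [hτJ]))⁻¹, funext fun i => ?_⟩
    change v' ((E j).symm ((E j).permCongr _ i)) = v ((E j).symm i)
    simpa using hτ _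

end SymmetricProduct

instance (m : ℕ) : ContinuousConstSMul (Perm (Fin m)) (Fin m → Circle) :=
  ⟨fun σ => continuous_pi fun i => continuous_apply (σ⁻¹ i)⟩

instance ProperlyDiscontinuousSMul.of_finite {Γ T : Type*} [TopologicalSpace T] [SMul Γ T]
    [Finite Γ] : ProperlyDiscontinuousSMul Γ T :=
  ⟨fun _ _ => Set.toFinite _⟩

instance (n : ℕ) (γ : Perm (Fin n)) : CompactSpace (TorusFix n γ) := by
  have hclosed : IsClosed {z : Fin n → Circle | ∀ i, z (γ⁻¹ i) = z i} := by
    simp only [Set.ofPred_forall]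
    exact isClosed_iInter fun i => isClosed_eq (continuous_apply _) (continuous_apply _)
  exact isCompact_iff_compactSpace.mp hclosed.isCompact

theorem Quotient.nonempty_homeomorph_of_surjective {X Y : Type*} [TopologicalSpace X]
    [CompactSpace X] [TopologicalSpace Y] [T2Space Y] {s : Setoid X} {f : X → Y}
    (hf : Continuous f) (hsurj : Surjective f) (hfib : ∀ x x', f x = f x' ↔ s x x') :
    Nonempty (Quotient s ≃ₜ Y) := by
  let F : Quotient s → Y := Quotient.lift f fun x x' h => (hfib x x').2 h
  have hF : Bijective F :=
    ⟨fun a b => Quotient.inductionOn₂ a b fun x x' h => Quotient.sound ((hfib x x').1 h),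
      fun y => (hsurj y).imp' (Quotient.mk s) fun _ hx => hx⟩
  exact ⟨(continuous_quot_lift _ hf).homeoOfEquivCompactToT2 (f := ofBijective F hF)⟩

theorem Equiv.Perm.exists_cycleLength_classes {α : Type*} [Finite α] {γ : Perm α} {l : ℕ}
    {nn rr : Fin l → ℕ} (hdistinct : Injective nn)
    (horb : ∀ x : α, ∃ j, Nat.card (orbit (zpowers γ) x) = nn j)
    (hcount : ∀ j, Nat.card {c : orbitRel.Quotient (zpowers γ) α //
        Nat.card {x // Quotient.mk _ x = c} = nn j} = rr j) :
    ∃ (J : orbitRel.Quotient (zpowers γ) α → Fin l) (_ : ∀ j, {c // J c = j} ≃ Fin (rr j)),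
      ∀ c c', J c' = J c ↔
        Nat.card {x // Quotient.mk _ x = c'} = Nat.card {x // Quotient.mk _ x = c} := by
  have hclass : ∀ c : orbitRel.Quotient (zpowers γ) α,
      ∃ j, Nat.card {x // Quotient.mk _ x = c} = nn j := fun c => by
    rw [← Quotient.out_eq c, card_fiber_mk_eq_card_orbit]
    exact horb c.out
  choose J hJ using hclass
  have hJ_iff : ∀ c j, J c = j ↔ Nat.card {x // Quotient.mk _ x = c} = nn j := fun c j => by
    rw [hJ, hdistinct.eq_iff]
  refine ⟨J, fun j => Finite.equivFinOfCardEq ?_, fun c c' => by rw [hJ_iff, ← hJ c]⟩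
  rw [← hcount j]
  exact Nat.card_congr (subtypeEquivRight fun c => hJ_iff c j)

/-- if `γ ∈ S_n` has cycle type with `r_j` cycles of length `n_j`
(`n_j` pairwise distinct), then `(𝕋ⁿ)^γ / Z(γ)` is homeomorphic to `∏_j Sym^{r_j} 𝕋`;
moreover the elements of `Z(γ)` preserving each cycle of `γ` (the cyclic factors
`(ℤ/n_j)^{r_j}` of `Z(γ)`) act trivially on `(𝕋ⁿ)^γ`. -/
theorem fixed_set_mod_centralizer_is_product_of_symmetric_products
    (n l : ℕ) (γ : Equiv.Perm (Fin n)) (nn rr : Fin l → ℕ)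
    (hdistinct : Function.Injective nn)
    (horb : ∀ x : Fin n, ∃ j, Nat.card (MulAction.orbit (Subgroup.zpowers γ) x) = nn j)
    (hcount : ∀ j, Nat.card {c : Quotient (MulAction.orbitRel (Subgroup.zpowers γ) (Fin n)) //
        Nat.card {x : Fin n // Quotient.mk (MulAction.orbitRel (Subgroup.zpowers γ) (Fin n)) x = c}
          = nn j} = rr j) :
    Nonempty ((Quotient (MulAction.orbitRel
        (Subgroup.centralizer ({γ} : Set (Equiv.Perm (Fin n)))) (TorusFix n γ))) ≃ₜ
      (∀ j : Fin l, SymTorus (rr j))) ∧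
    (∀ g : Subgroup.centralizer ({γ} : Set (Equiv.Perm (Fin n))),
      (∀ x : Fin n, (g : Equiv.Perm (Fin n)) x ∈ MulAction.orbit (Subgroup.zpowers γ) x) →
      ∀ z : TorusFix n γ, g • z = z) := by
  obtain ⟨J, E, hJ⟩ := Perm.exists_cycleLength_classes hdistinct horb hcount
  refine ⟨Quotient.nonempty_homeomorph_of_surjective
    ((continuous_symProdMap E).comp TorusFix.continuous_orbitFun)
    ((symProdMap_surjective E).comp TorusFix.orbitFun_surjective) fun z z' => ?_,
    TorusFix.smul_eq_self_of_forall_mem_orbit⟩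
  rw [comp_apply, comp_apply, eq_comm, symProdMap_eq_iff, orbitRel_apply, mem_orbit_iff,
    TorusFix.exists_smul_eq_iff]
  simp only [hJ]
end
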